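/- Let H₁,...,H_m be matrices of the form H_i = L_i + D_i as above, associated with graphs Ḡ₁,...,Ḡ_m on nodes {0,1,...,N}. If the union graph Ḡ₁ ∪ ... ∪ Ḡ_m is connected (node 0 reachable to all other nodes), then every eigenvalue of H₁ + ... + H_m has strictly positive real part. -/
import Mathlib


open Matrix Finset

/-- let `Hᵢ = Lᵢ + Dᵢ` be the structure matrices of leader-follower
graphs `Ḡ₁,…,Ḡ_m` on nodes `{0,1,…,N}` (follower adjacency `a k`, leader edges `d k`).
If the union graph is connected, i.e. node `0` is reachable to every other node using
edges of arbitrary graphs in the family, then every eigenvalue of `H₁ + ⋯ + H_m` has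
strictly positive real part. -/
theorem sum_structure_matrices_spectrum_pos_re {N m : ℕ}
    (a : Fin m → Fin N → Fin N → ℝ) (ha : ∀ k i j, a k i j = 0 ∨ a k i j = 1)
    (ha0 : ∀ k i, a k i i = 0)
    (d : Fin m → Fin N → ℝ) (hd : ∀ k i, d k i = 0 ∨ d k i = 1)
    (hconn : ∀ i : Fin N,
      Relation.ReflTransGen
        (fun u v : Option (Fin N) =>
          match u, v with
          | none, some i => ∃ k, d k i = 1
          | some j, some i => ∃ k, a k i j = 1
          | _, none => False)
        none (some i)) :
    ∀ μ ∈ spectrum ℂ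
      ((∑ k : Fin m,
          (Matrix.diagonal (fun i => ∑ j ∈ Finset.univ.erase i, a k i j) - Matrix.of (a k)
            + Matrix.diagonal (d k))).map (Complex.ofReal)),
      0 < μ.re := by
  intro μ hμ
  by_contra hle
  push_neg at hle
  set Hr : Matrix (Fin N) (Fin N) ℝ :=
    ∑ k : Fin m,
      (Matrix.diagonal (fun i => ∑ j ∈ Finset.univ.erase i, a k i j) - Matrix.of (a k)
        + Matrix.diagonal (d k)) with hHrdef
  set M : Matrix (Fin N) (Fin N) ℂ := Hr.map Complex.ofReal with hMdef
  -- get an eigenvector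
  have hμ' : Module.End.HasEigenvalue (Matrix.toLin' M) μ := by
    rw [Module.End.hasEigenvalue_iff_mem_spectrum]
    rwa [← AlgEquiv.spectrum_eq
      (Matrix.toLinAlgEquiv (Pi.basisFun ℂ (Fin N))) M] at hμ
  obtain ⟨v, h_eg, h_nz⟩ := hμ'.exists_hasEigenvector
  have hmul : M.mulVec v = μ • v := by
    have := Module.End.mem_eigenspace_iff.mp h_eg
    rwa [Matrix.toLin'_apply] at this
  have hrow : ∀ i, ∑ j, (Hr i j : ℂ) * v j = μ * v i := by
    intro i
    have := congrFun hmul i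
    simpa [Matrix.mulVec, dotProduct, hMdef, Matrix.map_apply] using this
  -- combined adjacency and leader weights
  set A : Fin N → Fin N → ℝ := fun i j => ∑ k, a k i j with hAdef
  set Dd : Fin N → ℝ := fun i => ∑ k, d k i with hDdef
  have hAnn : ∀ i j, 0 ≤ A i j := fun i j =>
    Finset.sum_nonneg fun k _ => by rcases ha k i j with h | h <;> simp [h]
  have hDnn : ∀ i, 0 ≤ Dd i := fun i =>
    Finset.sum_nonneg fun k _ => by rcases hd k i with h | h <;> simp [h]
  have hAii : ∀ i, A i i = 0 := fun i => Finset.sum_eq_zero fun k _ => ha0 k i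
  have hdiag : ∀ i, Hr i i = (∑ l ∈ Finset.univ.erase i, A i l) + Dd i := by
    intro i
    rw [hHrdef]
    simp only [Matrix.sum_apply, Matrix.add_apply, Matrix.sub_apply,
      Matrix.diagonal_apply_eq, Matrix.of_apply, ha0]
    rw [Finset.sum_add_distrib, Finset.sum_comm]
    simp [hAdef, hDdef, Finset.sum_sub_distrib, ha0]
  have hoff : ∀ i j, i ≠ j → Hr i j = -(A i j) := by
    intro i j hij
    rw [hHrdef]
    simp only [Matrix.sum_apply, Matrix.add_apply, Matrix.sub_apply,
      Matrix.diagonal_apply_ne _ hij, Matrix.of_apply]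
    simp [hAdef]
  -- the maximum modulus
  have hNE : Nonempty (Fin N) := by
    by_contra h
    exact h_nz (funext fun i => absurd (Nonempty.intro i) h)
  obtain ⟨i0, -, hi0⟩ := Finset.exists_mem_eq_sup' Finset.univ_nonempty (fun i => ‖v i‖)
  set c : ℝ := Finset.univ.sup' Finset.univ_nonempty (fun i => ‖v i‖) with hcdef
  have hle_c : ∀ j, ‖v j‖ ≤ c := fun j => Finset.le_sup' (fun i => ‖v i‖) (Finset.mem_univ j)
  have hcpos : 0 < c := by
    obtain ⟨j0, hj0⟩ : ∃ j, v j ≠ 0 := by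
      by_contra h
      push_neg at h
      exact h_nz (funext h)
    exact lt_of_lt_of_le (norm_pos_iff.mpr hj0) (hle_c j0)
  -- key step
  have key : ∀ i, ‖v i‖ = c → Dd i = 0 ∧ (∀ j, A i j ≠ 0 → ‖v j‖ = c) := by
    intro i hvic
    have hsplit : (Hr i i : ℂ) * v i + ∑ j ∈ Finset.univ.erase i, (Hr i j : ℂ) * v j
        = μ * v i := by
      rw [Finset.add_sum_erase Finset.univ (fun j => (Hr i j : ℂ) * v j)
        (Finset.mem_univ i)]
      exact hrow i
    have hE : ((Hr i i : ℂ) - μ) * v i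
        = ∑ j ∈ Finset.univ.erase i, (A i j : ℂ) * v j := by
      have h1 : ∑ j ∈ Finset.univ.erase i, (Hr i j : ℂ) * v j
          = -∑ j ∈ Finset.univ.erase i, (A i j : ℂ) * v j := by
        rw [← Finset.sum_neg_distrib]
        refine Finset.sum_congr rfl fun j hj => ?_
        have hij : i ≠ j := (Finset.ne_of_mem_erase hj).symm
        rw [hoff i j hij]
        push_cast
        ring
      rw [h1] at hsplit
      linear_combination hsplit
    have hnormE : ‖((Hr i i : ℂ) - μ) * v i‖
        ≤ ∑ j ∈ Finset.univ.erase i, A i j * ‖v j‖ := by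
      rw [hE]
      refine (norm_sum_le _ _).trans (le_of_eq ?_)
      refine Finset.sum_congr rfl fun j _ => ?_
      rw [norm_mul, Complex.norm_real, Real.norm_of_nonneg (hAnn i j)]
    have hlower : (Hr i i - μ.re) * c ≤ ‖((Hr i i : ℂ) - μ) * v i‖ := by
      rw [norm_mul, hvic]
      refine mul_le_mul_of_nonneg_right ?_ hcpos.le
      calc Hr i i - μ.re = ((Hr i i : ℂ) - μ).re := by simp
        _ ≤ ‖(Hr i i : ℂ) - μ‖ := Complex.re_le_norm _
    have hupper : ∑ j ∈ Finset.univ.erase i, A i j * ‖v j‖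
        ≤ (∑ j ∈ Finset.univ.erase i, A i j) * c := by
      rw [Finset.sum_mul]
      exact Finset.sum_le_sum fun j _ =>
        mul_le_mul_of_nonneg_left (hle_c j) (hAnn i j)
    have hchain : (Hr i i - μ.re) * c ≤ (∑ j ∈ Finset.univ.erase i, A i j) * c :=
      hlower.trans (hnormE.trans hupper)
    have hSle : Hr i i - μ.re ≤ ∑ j ∈ Finset.univ.erase i, A i j :=
      le_of_mul_le_mul_right hchain hcpos
    rw [hdiag i] at hSle
    have hDi : Dd i = 0 := le_antisymm (by linarith) (hDnn i)
    have hμ0 : μ.re = 0 := le_antisymm hle (by linarith)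
    refine ⟨hDi, ?_⟩
    -- equality forces all neighbors to have maximal modulus
    have hlower2 : (∑ j ∈ Finset.univ.erase i, A i j) * c
        ≤ ∑ j ∈ Finset.univ.erase i, A i j * ‖v j‖ := by
      have : (Hr i i - μ.re) * c ≤ ∑ j ∈ Finset.univ.erase i, A i j * ‖v j‖ :=
        hlower.trans hnormE
      rwa [hdiag i, hDi, hμ0, add_zero, sub_zero] at this
    have hsum0 : ∑ j ∈ Finset.univ.erase i, A i j * (c - ‖v j‖) = 0 := by
      have h1 : ∑ j ∈ Finset.univ.erase i, A i j * (c - ‖v j‖) ≤ 0 := by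
        have : ∑ j ∈ Finset.univ.erase i, A i j * (c - ‖v j‖)
            = (∑ j ∈ Finset.univ.erase i, A i j) * c
              - ∑ j ∈ Finset.univ.erase i, A i j * ‖v j‖ := by
          rw [Finset.sum_mul, ← Finset.sum_sub_distrib]
          exact Finset.sum_congr rfl fun j _ => by ring
        rw [this]
        linarith
      have h2 : 0 ≤ ∑ j ∈ Finset.univ.erase i, A i j * (c - ‖v j‖) :=
        Finset.sum_nonneg fun j _ =>
          mul_nonneg (hAnn i j) (by linarith [hle_c j])
      linarith
    intro j hAij
    have hji : j ≠ i := by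
      rintro rfl
      exact hAij (hAii _)
    have hterm := (Finset.sum_eq_zero_iff_of_nonneg
      (fun j _ => mul_nonneg (hAnn i j) (by linarith [hle_c j]))).mp hsum0 j
      (Finset.mem_erase.mpr ⟨hji, Finset.mem_univ j⟩)
    rcases mul_eq_zero.mp hterm with h | h
    · exact absurd h hAij
    · linarith [hle_c j]
  -- propagate along the connectivity relation to get a contradiction
  have main : ∀ w, Relation.ReflTransGen
      (fun u v : Option (Fin N) =>
        match u, v with
        | none, some i => ∃ k, d k i = 1
        | some j, some i => ∃ k, a k i j = 1
        | _, none => False)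
      none w → ∀ i, w = some i → ‖v i‖ ≠ c := by
    intro w hw
    induction hw with
    | refl => intro i hi; exact absurd hi (by simp)
    | @tail b w' hb hstep ih =>
      rintro i rfl hvic
      match b, hstep with
      | none, hstep =>
        obtain ⟨k, hk⟩ := hstep
        have hDi : Dd i = 0 := (key i hvic).1
        have : (1 : ℝ) ≤ Dd i := by
          calc (1 : ℝ) = d k i := hk.symm
            _ ≤ ∑ k', d k' i := Finset.single_le_sum (f := fun k' => d k' i)
                (fun k' _ => by rcases hd k' i with h | h <;> simp [h])
                (Finset.mem_univ k)
        linarith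
      | some j, hstep =>
        obtain ⟨k, hk⟩ := hstep
        have hAij : A i j ≠ 0 := by
          have : (1 : ℝ) ≤ A i j := by
            calc (1 : ℝ) = a k i j := hk.symm
              _ ≤ ∑ k', a k' i j := Finset.single_le_sum (f := fun k' => a k' i j)
                  (fun k' _ => by rcases ha k' i j with h | h <;> simp [h])
                  (Finset.mem_univ k)
          intro h; rw [h] at this; linarith
        exact ih j rfl ((key i hvic).2 j hAij)
  exact main (some i0) (hconn i0) i0 rfl hi0.symm
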